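/- Let (S, A, H, P, μ) be a finite episodic MDP, π⁺ a deterministic target policy, and ε > 0. Suppose a step-dependent modified reward function r̃ satisfies: (i) r̃_h(s, π⁺_h(s)) = μ(s, π⁺_h(s)) for all h, s; and (ii) for all h, s and every a ≠ π⁺_h(s), r̃_h(s,a) ≤ Q^{π⁺}_h(s, π⁺_h(s)) − E_{s' ~ P(s,a)}[V^{π⁺}_{h+1}(s')] − ε, where Q^{π⁺} and V^{π⁺} are computed with the true rewards μ. Then in the modified MDP (rewards r̃, transitions P): for every deterministic policy π, every h ∈ {1,…,H}, and every s, Ṽ^π_h(s) ≤ Ṽ^{π⁺}_h(s); for every a ≠ π⁺_h(s) and every π, Q̃^π_h(s,a) ≤ Q̃^{π⁺}_h(s, π⁺_h(s)) − ε; and in particular, if π_h(s) ≠ π⁺_h(s) then Ṽ^π_h(s) ≤ Ṽ^{π⁺}_h(s) − ε. -/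

import Mathlib

open scoped BigOperators

namespace RLAttack

variable {S A : Type*} [Fintype S] [Fintype A]

/-- Expectation of `f` under a `PMF` on a finite type. -/
noncomputable def expVal (p : PMF S) (f : S → ℝ) : ℝ :=
  ∑ s' : S, (p s').toReal * f s'

/-- Auxiliary backward-induction value: `n` steps remaining, current step `h`. -/
noncomputable def valAux (r : ℕ → S → A → ℝ) (P : ℕ → S → A → PMF S)
    (π : ℕ → S → A) : ℕ → ℕ → S → ℝ
  | 0, _, _ => 0
  | n + 1, h, s => r h s (π h s) + expVal (P h s (π h s)) (valAux r P π n (h + 1))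

/-- Value function `V^π_h(s)` for horizon `H`: `V^π_{H+1} = 0` and
`V^π_h(s) = r_h(s, π_h(s)) + E_{s' ~ P_h(s, π_h(s))}[V^π_{h+1}(s')]`. -/
noncomputable def V (H : ℕ) (r : ℕ → S → A → ℝ) (P : ℕ → S → A → PMF S)
    (π : ℕ → S → A) (h : ℕ) (s : S) : ℝ :=
  valAux r P π (H + 1 - h) h s

/-- Q-value function `Q^π_h(s,a) = r_h(s,a) + E_{s' ~ P_h(s,a)}[V^π_{h+1}(s')]`. -/
noncomputable def Q (H : ℕ) (r : ℕ → S → A → ℝ) (P : ℕ → S → A → PMF S)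
    (π : ℕ → S → A) (h : ℕ) (s : S) (a : A) : ℝ :=
  r h s a + expVal (P h s a) (fun s' => V H r P π (h + 1) s')

end RLAttack

/-!
Since `r̃` agrees with `μ` along `π⁺`, both reward functions give `π⁺` the same value, so
condition (ii) says exactly that `π⁺` has an `ε`-action gap in the modified MDP:
`Q̃^{π⁺}_h(s, a) ≤ Ṽ^{π⁺}_h(s) - ε` for `a ≠ π⁺_h(s)`. A policy with such a gap dominates every
policy `π`, by backward induction on `h`: if `Ṽ^π_{h+1} ≤ Ṽ^{π⁺}_{h+1}` then
`Q̃^π_h(s, a) ≤ Q̃^{π⁺}_h(s, a)`, which is `Ṽ^{π⁺}_h(s)` for `a = π⁺_h(s)` and at most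
`Ṽ^{π⁺}_h(s) - ε` otherwise.
-/

namespace RLAttack

variable {S A : Type*} [Fintype S]

theorem expVal_mono (p : PMF S) {f g : S → ℝ} (hfg : ∀ s, f s ≤ g s) :
    expVal p f ≤ expVal p g :=
  Finset.sum_le_sum fun s _ => mul_le_mul_of_nonneg_left (hfg s) ENNReal.toReal_nonneg

theorem backward_induction {H : ℕ} {p : ℕ → Prop} (terminal : ∀ h, H < h → p h)
    (step : ∀ h ≤ H, p (h + 1) → p h) (h : ℕ) : p h :=
  Nat.strong_decreasing_induction ⟨H, terminal⟩
    (fun n ih => if hn : n ≤ H then step n hn (ih _ n.lt_add_one) else terminal n (by omega)) h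

section Bellman

variable {H : ℕ} {r : ℕ → S → A → ℝ} {P : ℕ → S → A → PMF S} {π : ℕ → S → A} {h : ℕ}

theorem V_of_lt (hh : H < h) (s : S) : V H r P π h s = 0 := by
  rw [V, Nat.sub_eq_zero_of_le hh, valAux]

theorem V_eq_Q (hh : h ≤ H) (s : S) : V H r P π h s = Q H r P π h s (π h s) := by
  rw [V, Q, show H + 1 - h = H - h + 1 by omega, valAux]
  simp only [V, show H + 1 - (h + 1) = H - h by omega]

theorem Q_mono_of_V_le {π' : ℕ → S → A} (hV : ∀ s, V H r P π (h + 1) s ≤ V H r P π' (h + 1) s)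
    (s : S) (a : A) : Q H r P π h s a ≤ Q H r P π' h s a :=
  add_le_add_right (expVal_mono _ hV) _

theorem V_congr_reward {r' : ℕ → S → A → ℝ}
    (hr : ∀ k ∈ Finset.Icc h H, ∀ s, r k s (π k s) = r' k s (π k s)) (s : S) :
    V H r P π h s = V H r' P π h s := by
  induction h using backward_induction (H := H) generalizing s with
  | terminal h hh => rw [V_of_lt hh, V_of_lt hh]
  | step h hh ih =>
    have hnext : ∀ s', V H r P π (h + 1) s' = V H r' P π (h + 1) s' :=
      ih fun k hk => hr k (Finset.Icc_subset_Icc_left h.le_succ hk)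
    rw [V_eq_Q hh, V_eq_Q hh, Q, Q, hr h (by simp [hh]) s, funext hnext]

end Bellman

section ActionGap

variable {H : ℕ} {r : ℕ → S → A → ℝ} {P : ℕ → S → A → PMF S} {πt : ℕ → S → A} {ε : ℝ}
  {h : ℕ}

def HasActionGap (H : ℕ) (r : ℕ → S → A → ℝ) (P : ℕ → S → A → PMF S) (πt : ℕ → S → A)
    (ε : ℝ) (h : ℕ) : Prop :=
  ∀ k ∈ Finset.Icc h H, ∀ s a, a ≠ πt k s → Q H r P πt k s a ≤ V H r P πt k s - ε

theorem HasActionGap.mono (hgap : HasActionGap H r P πt ε h) {k : ℕ} (hhk : h ≤ k) :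
    HasActionGap H r P πt ε k :=
  fun j hj => hgap j (Finset.Icc_subset_Icc_left hhk hj)

theorem HasActionGap.V_le (hε : 0 ≤ ε) (hgap : HasActionGap H r P πt ε h)
    (π : ℕ → S → A) (s : S) : V H r P π h s ≤ V H r P πt h s := by
  induction h using backward_induction (H := H) generalizing s with
  | terminal h hh => rw [V_of_lt hh, V_of_lt hh]
  | step h hh ih =>
    have hnext : ∀ s', V H r P π (h + 1) s' ≤ V H r P πt (h + 1) s' :=
      ih (hgap.mono h.le_succ)
    rw [V_eq_Q hh, V_eq_Q hh]
    by_cases hπ : π h s = πt h s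
    · exact hπ ▸ Q_mono_of_V_le hnext s _
    · calc Q H r P π h s (π h s) ≤ Q H r P πt h s (π h s) := Q_mono_of_V_le hnext s _
        _ ≤ V H r P πt h s - ε := hgap h (by simp [hh]) s _ hπ
        _ ≤ Q H r P πt h s (πt h s) := by rw [V_eq_Q hh]; linarith

theorem HasActionGap.Q_le (hε : 0 ≤ ε) (hh : h ≤ H) (hgap : HasActionGap H r P πt ε h)
    (π : ℕ → S → A) (s : S) (a : A) (ha : a ≠ πt h s) :
    Q H r P π h s a ≤ Q H r P πt h s (πt h s) - ε :=
  calc Q H r P π h s a ≤ Q H r P πt h s a :=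
        Q_mono_of_V_le ((hgap.mono h.le_succ).V_le hε π) s a
    _ ≤ V H r P πt h s - ε := hgap h (by simp [hh]) s a ha
    _ = Q H r P πt h s (πt h s) - ε := by rw [V_eq_Q hh]

theorem hasActionGap_of_reward_le {r' : ℕ → S → A → ℝ}
    (hagree : ∀ h ∈ Finset.Icc 1 H, ∀ s, r' h s (πt h s) = r h s (πt h s))
    (hoff : ∀ h ∈ Finset.Icc 1 H, ∀ s a, a ≠ πt h s →
      r' h s a ≤ Q H r P πt h s (πt h s) - expVal (P h s a) (V H r P πt (h + 1)) - ε) :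
    HasActionGap H r' P πt ε 1 := by
  have hV : ∀ k, 1 ≤ k → V H r' P πt k = V H r P πt k := fun k hk =>
    funext <| V_congr_reward fun j hj => hagree j (Finset.Icc_subset_Icc_left hk hj)
  intro h hh s a ha
  obtain ⟨hh1, hhH⟩ := Finset.mem_Icc.mp hh
  have hoff' := hoff h hh s a ha
  rw [Q, hV h hh1, hV (h + 1) (by omega), V_eq_Q hhH]
  linarith

end ActionGap

theorem statement8_general {S A : Type*} [Fintype S]
    (H : ℕ) (P : S → A → PMF S) (μ : S → A → ℝ)
    (πp : ℕ → S → A) (ε : ℝ) (hε : 0 < ε) (rt : ℕ → S → A → ℝ)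
    (h1 : ∀ h ∈ Finset.Icc 1 H, ∀ s : S, rt h s (πp h s) = μ s (πp h s))
    (h2 : ∀ h ∈ Finset.Icc 1 H, ∀ s : S, ∀ a : A, a ≠ πp h s →
      rt h s a ≤ Q H (fun _ s a => μ s a) (fun _ => P) πp h s (πp h s)
        - expVal (P s a) (fun s' => V H (fun _ s a => μ s a) (fun _ => P) πp (h + 1) s')
        - ε) :
    ∀ π : ℕ → S → A, ∀ h ∈ Finset.Icc 1 H, ∀ s : S,
      V H rt (fun _ => P) π h s ≤ V H rt (fun _ => P) πp h s ∧
      (∀ a : A, a ≠ πp h s →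
        Q H rt (fun _ => P) π h s a ≤ Q H rt (fun _ => P) πp h s (πp h s) - ε) ∧
      (π h s ≠ πp h s →
        V H rt (fun _ => P) π h s ≤ V H rt (fun _ => P) πp h s - ε) := by
  intro π h hh s
  obtain ⟨hh1, hhH⟩ := Finset.mem_Icc.mp hh
  have hgap := (hasActionGap_of_reward_le h1 h2).mono hh1
  have hQ := hgap.Q_le hε.le hhH π s
  refine ⟨hgap.V_le hε.le π s, hQ, fun hne => ?_⟩
  rw [V_eq_Q hhH, V_eq_Q hhH]
  exact hQ _ hne

/-- If modified rewards agree with the true rewards along the target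
policy and every off-target reward is at most
`Q^{π⁺}_h(s, π⁺_h(s)) − E_{s'~P(s,a)}[V^{π⁺}_{h+1}(s')] − ε` (true-reward quantities),
then in the modified MDP the target policy weakly dominates every policy, every
off-target action is `ε`-suboptimal in `Q̃`-value, and at any disagreeing `(h,s)` the value
gap is at least `ε`. -/
theorem statement8 {S A : Type*} [Fintype S] [Fintype A] [Nonempty S] [Nonempty A]
    (H : ℕ) (hH : 1 ≤ H) (P : S → A → PMF S) (μ : S → A → ℝ)
    (πp : ℕ → S → A) (ε : ℝ) (hε : 0 < ε) (rt : ℕ → S → A → ℝ)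
    (h1 : ∀ h ∈ Finset.Icc 1 H, ∀ s : S, rt h s (πp h s) = μ s (πp h s))
    (h2 : ∀ h ∈ Finset.Icc 1 H, ∀ s : S, ∀ a : A, a ≠ πp h s →
      rt h s a ≤ Q H (fun _ s a => μ s a) (fun _ => P) πp h s (πp h s)
        - expVal (P s a) (fun s' => V H (fun _ s a => μ s a) (fun _ => P) πp (h + 1) s')
        - ε) :
    ∀ π : ℕ → S → A, ∀ h ∈ Finset.Icc 1 H, ∀ s : S,
      V H rt (fun _ => P) π h s ≤ V H rt (fun _ => P) πp h s ∧
      (∀ a : A, a ≠ πp h s →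
        Q H rt (fun _ => P) π h s a ≤ Q H rt (fun _ => P) πp h s (πp h s) - ε) ∧
      (π h s ≠ πp h s →
        V H rt (fun _ => P) π h s ≤ V H rt (fun _ => P) πp h s - ε) :=
  statement8_general H P μ πp ε hε rt h1 h2

end RLAttack
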